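/- For natural numbers n ≥ 2, if k is a rational number satisfying k^(n-1) = i^(n-1)/n for some nonzero integer i, then n is a perfect (n-1)-th power of a rational, hence n ≤ 2. -/

import Mathlib

/-!
From `k ^ (n - 1) = i ^ (n - 1) / n` we get `(i / k) ^ (n - 1) = n`. A rational whose power is an
integer has that integer as the power of its numerator, so `n = a ^ (n - 1)` for a natural `a`;
but `a ^ m = m + 1` has no solution once `m ≥ 2`, since `0 ^ m = 0`, `1 ^ m = 1` and
`(a + 2) ^ m ≥ 2 ^ m > m + 1`.
-/

theorem div_pow_eq_of_pow_eq_pow_div {F : Type*} [Field F] {c k N : F} {m : ℕ} (hc : c ≠ 0)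
    (hk : k ^ m = c ^ m / N) : (c / k) ^ m = N := by
  rw [div_pow, hk, div_div_cancel₀ (pow_ne_zero m hc)]

theorem Rat.exists_nat_pow_eq_of_pow_eq_natCast {q : ℚ} {m N : ℕ} (h : q ^ m = N) :
    ∃ a : ℕ, a ^ m = N := by
  refine ⟨q.num.natAbs, ?_⟩
  have hnum : q.num ^ m = N := by rw [← Rat.num_pow, h, Rat.num_natCast]
  rw [← Int.natAbs_pow, hnum, Int.natAbs_natCast]

theorem Nat.add_one_lt_two_pow {m : ℕ} (hm : 2 ≤ m) : m + 1 < 2 ^ m := by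
  have h : m - 1 < 2 ^ (m - 1) := Nat.lt_two_pow_self
  have h2 : 2 ^ m = 2 * 2 ^ (m - 1) := by
    rw [← Nat.pow_succ']; congr 1; omega
  omega

theorem Nat.pow_ne_add_one (a : ℕ) {m : ℕ} (hm : 2 ≤ m) : a ^ m ≠ m + 1 := by
  rcases a with _ | _ | a
  · rw [zero_pow (by omega)]; omega
  · rw [Nat.zero_add, one_pow]; omega
  · have : 2 ^ m ≤ (a + 1 + 1) ^ m := Nat.pow_le_pow_left (by omega) m
    have := Nat.add_one_lt_two_pow hm
    omega

theorem stmt_3_general (n : ℕ) (i : ℤ) (hi : i ≠ 0) (k : ℚ)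
    (hk : k ^ (n - 1) = (i : ℚ) ^ (n - 1) / (n : ℚ)) :
    (∃ q : ℚ, q ^ (n - 1) = (n : ℚ)) ∧ n ≤ 2 := by
  have hq : ((i : ℚ) / k) ^ (n - 1) = n := div_pow_eq_of_pow_eq_pow_div (by exact_mod_cast hi) hk
  refine ⟨⟨_, hq⟩, ?_⟩
  obtain ⟨a, ha⟩ := Rat.exists_nat_pow_eq_of_pow_eq_natCast hq
  by_contra! h
  exact Nat.pow_ne_add_one a (m := n - 1) (by omega) (by rw [ha, Nat.sub_add_cancel (by omega)])

theorem stmt_3 (n : ℕ) (hn : 2 ≤ n) (i : ℤ) (hi : i ≠ 0) (k : ℚ)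
    (hk : k ^ (n - 1) = (i : ℚ) ^ (n - 1) / (n : ℚ)) :
    (∃ q : ℚ, q ^ (n - 1) = (n : ℚ)) ∧ n ≤ 2 :=
  stmt_3_general n i hi k hk
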